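/- If a shortest valid path in the marked cycle contains an a-turn (a consecutive subsequence c-move, b-move, a-move), then the node covered by that b-move belongs to the marked set B; likewise, if it contains a c-turn (subsequence a-move, d-move, c-move), the node covered by that d-move belongs to B. -/
import Mathlib


/-- The four move types in the marked cycle. -/
inductive Move : Type
  | a | b | c | d
deriving DecidableEq

/-- Where a move from node `x` in `ZMod k` leads. -/
def Move.step {k : ℕ} (x : ZMod k) : Move → ZMod k
  | .a => x - 1
  | .b => x
  | .c => x + 1
  | .d => x

/-- The node covered by a move performed from node `x`. -/
def Move.covers {k : ℕ} (x : ZMod k) : Move → ZMod k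
  | .a => x - 1
  | .b => x
  | .c => x
  | .d => x - 1

/-- The node reached after performing a sequence of moves starting at `s`. -/
def endAt {k : ℕ} (s : ZMod k) : List Move → ZMod k
  | [] => s
  | m :: ms => endAt (Move.step s m) ms

/-- The set of nodes covered by a sequence of moves starting at `s`. -/
def coveredSet {k : ℕ} (s : ZMod k) : List Move → Set (ZMod k)
  | [] => ∅
  | m :: ms => insert (Move.covers s m) (coveredSet (Move.step s m) ms)

/-- A valid path in the marked cycle on `ZMod k` with marked set `B`, start `s`,
end `t`: a nonempty sequence of moves from `s` to `t` covering every node of `B`. -/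
def ValidPath {k : ℕ} (B : Set (ZMod k)) (s t : ZMod k) (p : List Move) : Prop :=
  p ≠ [] ∧ endAt s p = t ∧ B ⊆ coveredSet s p

/-- A shortest valid path: valid and of minimum length among all valid paths. -/
def ShortestPath {k : ℕ} (B : Set (ZMod k)) (s t : ZMod k) (p : List Move) : Prop :=
  ValidPath B s t p ∧ ∀ q : List Move, ValidPath B s t q → p.length ≤ q.length

lemma endAt_append {k : ℕ} (s : ZMod k) (p q : List Move) :
    endAt s (p ++ q) = endAt (endAt s p) q := by
  induction p generalizing s with
  | nil => rfl
  | cons m ms ih => simp [endAt, ih]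

lemma coveredSet_append {k : ℕ} (s : ZMod k) (p q : List Move) :
    coveredSet s (p ++ q) = coveredSet s p ∪ coveredSet (endAt s p) q := by
  induction p generalizing s with
  | nil => simp [coveredSet, endAt]
  | cons m ms ih => simp [coveredSet, endAt, ih, Set.insert_union]

/-- if a shortest valid path contains an a-turn (consecutive c-move,
b-move, a-move) then the node covered by that b-move is marked; if it contains a
c-turn (consecutive a-move, d-move, c-move) then the node covered by that d-move is
marked. -/

theorem turn_nodes_marked (k : ℕ) (hk : 2 ≤ k) (B : Set (ZMod k)) (s t : ZMod k)
    (p : List Move) (hp : ShortestPath B s t p) :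
    (∀ p₁ p₂ : List Move, p = p₁ ++ [Move.c, Move.b, Move.a] ++ p₂ →
      endAt s (p₁ ++ [Move.c]) ∈ B) ∧
    (∀ p₁ p₂ : List Move, p = p₁ ++ [Move.a, Move.d, Move.c] ++ p₂ →
      endAt s (p₁ ++ [Move.a]) - 1 ∈ B) := by

  constructor
  · intro p₁ p₂ hpe
    set x := endAt s p₁ with hx
    have hend : endAt s (p₁ ++ [Move.c]) = x + 1 := by
      rw [endAt_append]; rfl
    rw [hend]
    by_contra hxB
    have hq : ValidPath B s t (p₁ ++ [Move.b] ++ p₂) := by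
      obtain ⟨-, hpt, hpc⟩ := hp.1
      refine ⟨by simp, ?_, ?_⟩
      · rw [endAt_append, endAt_append]
        rw [hpe, endAt_append, endAt_append] at hpt
        simpa [endAt, Move.step] using hpt
      · intro y hy
        have := hpc hy
        rw [hpe, coveredSet_append, coveredSet_append, endAt_append] at this
        rw [coveredSet_append, coveredSet_append, endAt_append]
        have hne : y ≠ x + 1 := fun h => hxB (h ▸ hy)
        simp only [coveredSet, endAt, Move.step, Move.covers, ← hx, add_sub_cancel_right,
          Set.mem_union, Set.mem_insert_iff, Set.mem_empty_iff_false, or_false] at this ⊢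
        tauto
    have := hp.2 _ hq
    simp [hpe] at this
  · intro p₁ p₂ hpe
    set x := endAt s p₁ with hx
    have hend : endAt s (p₁ ++ [Move.a]) = x - 1 := by
      rw [endAt_append]; rfl
    rw [hend]
    by_contra hxB
    have hq : ValidPath B s t (p₁ ++ [Move.d] ++ p₂) := by
      obtain ⟨-, hpt, hpc⟩ := hp.1
      refine ⟨by simp, ?_, ?_⟩
      · rw [endAt_append, endAt_append]
        rw [hpe, endAt_append, endAt_append] at hpt
        simpa [endAt, Move.step, sub_add_cancel] using hpt
      · intro y hy
        have := hpc hy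
        rw [hpe, coveredSet_append, coveredSet_append, endAt_append] at this
        rw [coveredSet_append, coveredSet_append, endAt_append]
        have hne : y ≠ x - 1 - 1 := fun h => hxB (h ▸ hy)
        simp only [coveredSet, endAt, Move.step, Move.covers, sub_add_cancel, ← hx,
          Set.mem_union, Set.mem_insert_iff, Set.mem_empty_iff_false, or_false] at this ⊢
        tauto
    have := hp.2 _ hq
    simp [hpe] at this
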